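/- Let α > −1/2 be real and let P^{(∞)}_α(z) = [[1,0],[2αi,1]] · diag((z+1)^{−1/4}, (z+1)^{1/4}) · V · diag(w(z)^{−α}, w(z)^{α}) on ℂ∖(−∞,0], with w(z) = ((z+1)^{1/2}+1)/((z+1)^{1/2}−1), V = (1/√2)[[1,i],[i,1]], and principal branches of all powers. Then P^{(∞)}_α(z) · V^{−1} · diag(z^{1/4}, z^{−1/4}) → I (the 2×2 identity matrix) as |z| → ∞ with z ∉ (−∞,0], where z^{±1/4} are principal branches. -/

import Mathlib

/-!
Conjugating `diag(w^{-α}, w^{α})` by `V` gives `[[c, -i s], [i s, c]]` with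
`c = (w^{-α} + w^{α})/2` and `s = (w^{-α} - w^{α})/2`. As `|z| → ∞`, `w → 1`, so `c → 1` and
`s → 0`, while `(z+1)^{±1/4} z^{∓1/4} → 1` because `log (z+1) - log z = log (1 + 1/z)` for all
`|z| > 1`. The only delicate entry is `(z+1)^{1/4} z^{1/4} · i s`: there `s ~ -α (w - 1)` and
`w - 1 ~ 2 z^{-1/2}`, so it tends to `-2αi`. Hence the product without the prefactor `E` tends to
`[[1, 0], [-2αi, 1]] = E⁻¹`.
-/

open Complex Matrix Filter Topology

/-- `V = (1/√2)[[1, i], [i, 1]]`. -/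
noncomputable def Vmat : Matrix (Fin 2) (Fin 2) ℂ :=
  ((Real.sqrt 2 : ℂ))⁻¹ • !![1, I; I, 1]

/-- `w(z) = ((z+1)^{1/2}+1)/((z+1)^{1/2}−1)`, principal branch. -/
noncomputable def wFun (z : ℂ) : ℂ :=
  ((z + 1) ^ ((1 : ℂ) / 2) + 1) / ((z + 1) ^ ((1 : ℂ) / 2) - 1)

/-- The global parametrix `P^{(∞)}_α`. -/
noncomputable def Pinf (α : ℝ) (z : ℂ) : Matrix (Fin 2) (Fin 2) ℂ :=
  !![1, 0; 2 * (α : ℂ) * I, 1] *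
  !![(z + 1) ^ (-(1 : ℂ) / 4), 0; 0, (z + 1) ^ ((1 : ℂ) / 4)] *
  Vmat *
  !![wFun z ^ (-(α : ℂ)), 0; 0, wFun z ^ ((α : ℂ))]

open Bornology

lemma tendsto_cpow_ofReal_cobounded {x : ℝ} (hx : 0 < x) :
    Tendsto (fun z : ℂ => z ^ (x : ℂ)) (cobounded ℂ) (cobounded ℂ) := by
  rw [← tendsto_norm_atTop_iff_cobounded]
  simpa only [norm_cpow_real, Function.comp_def] using
    (tendsto_rpow_atTop hx).comp tendsto_norm_cobounded_atTop

lemma tendsto_cpow_ofReal_neg_cobounded {x : ℝ} (hx : x < 0) :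
    Tendsto (fun z : ℂ => z ^ (x : ℂ)) (cobounded ℂ) (𝓝 0) := by
  rw [tendsto_zero_iff_norm_tendsto_zero]
  simpa only [norm_cpow_real, neg_neg, Function.comp_def] using
    (tendsto_rpow_neg_atTop (neg_pos.mpr hx)).comp tendsto_norm_cobounded_atTop

lemma arg_add_arg_one_add_inv_mem_Ioc {z : ℂ} (hz : 1 < ‖z‖) :
    arg z + arg (1 + z⁻¹) ∈ Set.Ioc (-Real.pi) Real.pi := by
  have him : (1 + z⁻¹).im = -z.im / normSq z := by simp [neg_div]
  have hnormSq : 0 < normSq z := normSq_pos.mpr (norm_pos_iff.mp (one_pos.trans hz))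
  rcases lt_trichotomy z.im 0 with hlt | heq | hgt
  · have : 0 ≤ arg (1 + z⁻¹) :=
      arg_nonneg_iff.mpr (him ▸ div_nonneg (by linarith) hnormSq.le)
    constructor <;> linarith [neg_pi_lt_arg z, arg_neg_iff.mpr hlt, arg_le_pi (1 + z⁻¹)]
  · -- `1 + z⁻¹` is then a positive real, because `‖z⁻¹‖ < 1`
    have hre : 0 ≤ (1 + z⁻¹).re := by
      simp only [add_re, one_re]
      linarith [neg_le_of_abs_le (abs_re_le_norm z⁻¹), norm_inv z, inv_lt_one_of_one_lt₀ hz]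
    rw [arg_eq_zero_iff.mpr ⟨hre, by simp [him, heq]⟩, add_zero]
    exact ⟨neg_pi_lt_arg z, arg_le_pi z⟩
  · have : arg (1 + z⁻¹) < 0 :=
      arg_neg_iff.mpr (him ▸ div_neg_of_neg_of_pos (by linarith) hnormSq)
    constructor <;> linarith [neg_pi_lt_arg (1 + z⁻¹), arg_nonneg_iff.mpr hgt.le, arg_le_pi z]

lemma log_add_one_eq_log_add_log {z : ℂ} (hz : 1 < ‖z‖) :
    log (z + 1) = log z + log (1 + z⁻¹) := by
  have hz0 : z ≠ 0 := norm_pos_iff.mp (one_pos.trans hz)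
  have h1z : 1 + z⁻¹ ≠ 0 := fun h => by
    simp [inv_eq_iff_eq_inv.mp (eq_neg_of_add_eq_zero_right h)] at hz
  rw [← log_mul_eq_add_log_iff hz0 h1z |>.mpr (arg_add_arg_one_add_inv_mem_Ioc hz),
    mul_add, mul_one, mul_inv_cancel₀ hz0]

lemma tendsto_add_one_cpow_mul_cpow_cobounded {c d : ℂ} (hcd : c + d = 0) :
    Tendsto (fun z : ℂ => (z + 1) ^ c * z ^ d) (cobounded ℂ) (𝓝 1) := by
  have hlog : Tendsto (fun z : ℂ => log (1 + z⁻¹)) (cobounded ℂ) (𝓝 0) := by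
    have h1 : Tendsto (fun z : ℂ => 1 + z⁻¹) (cobounded ℂ) (𝓝 1) := by
      simpa using tendsto_inv₀_cobounded.const_add (1 : ℂ)
    simpa [Function.comp_def] using (continuousAt_clog (by simp)).tendsto.comp h1
  have hexp : Tendsto (fun z : ℂ => exp (c * log (1 + z⁻¹))) (cobounded ℂ) (𝓝 1) := by
    simpa [Function.comp_def] using
      (continuous_exp.tendsto 0).comp (by simpa using hlog.const_mul c)
  refine hexp.congr' ?_
  filter_upwards [tendsto_norm_cobounded_atTop.eventually_gt_atTop 1] with z hz
  have hz0 : z ≠ 0 := norm_pos_iff.mp (one_pos.trans hz)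
  have hz1 : z + 1 ≠ 0 := fun h => by simp [eq_neg_of_add_eq_zero_left h] at hz
  rw [cpow_def_of_ne_zero hz1, cpow_def_of_ne_zero hz0, ← exp_add,
    log_add_one_eq_log_add_log hz, eq_neg_of_add_eq_zero_right hcd]
  ring_nf

lemma Filter.Tendsto.mul_sub_of_hasDerivAt {ι 𝕜 : Type*} [NontriviallyNormedField 𝕜]
    {l : Filter ι} {g : 𝕜 → 𝕜} {g' x L : 𝕜} (hg : HasDerivAt g g' x) {u h : ι → 𝕜}
    (hu : Tendsto u l (𝓝[≠] x)) (hh : Tendsto (fun t => h t * (u t - x)) l (𝓝 L)) :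
    Tendsto (fun t => h t * (g (u t) - g x)) l (𝓝 (g' * L)) := by
  refine ((hasDerivAt_iff_tendsto_slope.mp hg).comp hu |>.mul hh).congr' ?_
  filter_upwards [hu (self_mem_nhdsWithin)] with t ht
  rw [Function.comp_apply, slope_def_field]
  field_simp [sub_ne_zero.mpr ht]

lemma wFun_sub_one {z : ℂ} (h : (z + 1) ^ ((1 : ℂ) / 2) ≠ 1) :
    wFun z - 1 = 2 * ((z + 1) ^ ((1 : ℂ) / 2) - 1)⁻¹ := by
  rw [wFun]
  field_simp [sub_ne_zero.mpr h]
  ring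

lemma wFun_ne_one (z : ℂ) : wFun z ≠ 1 := by
  by_cases h : (z + 1) ^ ((1 : ℂ) / 2) = 1
  · simp only [wFun, h, sub_self, div_zero]
    exact zero_ne_one
  · rw [← sub_ne_zero, wFun_sub_one h]
    exact mul_ne_zero two_ne_zero (inv_ne_zero (sub_ne_zero.mpr h))

lemma tendsto_cpow_half_add_one_cobounded :
    Tendsto (fun z : ℂ => (z + 1) ^ ((1 : ℂ) / 2)) (cobounded ℂ) (cobounded ℂ) := by
  have := (tendsto_cpow_ofReal_cobounded (x := 1 / 2) one_half_pos).comp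
    (tendsto_add_const_cobounded (1 : ℂ))
  simpa [Function.comp_def] using this

lemma tendsto_inv_cpow_half_add_one_sub_one_cobounded :
    Tendsto (fun z : ℂ => ((z + 1) ^ ((1 : ℂ) / 2) - 1)⁻¹) (cobounded ℂ) (𝓝 0) :=
  tendsto_inv₀_cobounded.comp <|
    (tendsto_sub_const_cobounded 1).comp tendsto_cpow_half_add_one_cobounded

lemma tendsto_wFun_cobounded : Tendsto wFun (cobounded ℂ) (𝓝 1) := by
  have h := (tendsto_inv_cpow_half_add_one_sub_one_cobounded.const_mul 2).const_add 1
  rw [mul_zero, add_zero] at h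
  refine h.congr' ?_
  filter_upwards [tendsto_cpow_half_add_one_cobounded.eventually_ne_cobounded 1] with z hz
  rw [← wFun_sub_one hz, add_sub_cancel]

lemma tendsto_cpow_half_mul_wFun_sub_one_cobounded :
    Tendsto (fun z : ℂ => z ^ ((1 : ℂ) / 2) * (wFun z - 1)) (cobounded ℂ) (𝓝 2) := by
  have h := ((tendsto_add_one_cpow_mul_cpow_cobounded (c := -(1 / 2)) (d := 1 / 2)
    (neg_add_cancel _)).mul
    (tendsto_inv_cpow_half_add_one_sub_one_cobounded.const_add 1)).const_mul 2
  rw [add_zero, mul_one, mul_one] at h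
  refine h.congr' ?_
  filter_upwards [tendsto_cpow_half_add_one_cobounded.eventually_ne_cobounded 1,
    tendsto_cpow_half_add_one_cobounded.eventually_ne_cobounded 0] with z hz1 hz0
  rw [wFun_sub_one hz1, cpow_neg]
  field_simp [sub_ne_zero.mpr hz1]
  ring

lemma tendsto_cpow_half_mul_wFun_cpow_sub_cobounded (a : ℂ) :
    Tendsto (fun z : ℂ => z ^ ((1 : ℂ) / 2) * (wFun z ^ (-a) - wFun z ^ a)) (cobounded ℂ)
      (𝓝 (-4 * a)) := by
  have hg : HasDerivAt (fun t : ℂ => t ^ (-a) - t ^ a) (-2 * a) 1 := by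
    have h := ((hasStrictDerivAt_cpow_const (c := -a) one_mem_slitPlane).sub
      (hasStrictDerivAt_cpow_const (c := a) one_mem_slitPlane)).hasDerivAt
    rw [one_cpow, one_cpow, mul_one, mul_one] at h
    exact h.congr_deriv (by ring)
  have hw : Tendsto wFun (cobounded ℂ) (𝓝[≠] 1) :=
    tendsto_nhdsWithin_iff.mpr ⟨tendsto_wFun_cobounded, .of_forall wFun_ne_one⟩
  have h := hw.mul_sub_of_hasDerivAt hg tendsto_cpow_half_mul_wFun_sub_one_cobounded
  simp only [one_cpow, sub_self, sub_zero] at h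
  convert h using 2
  ring

lemma tendsto_wFun_cpow_cobounded (c : ℂ) :
    Tendsto (fun z => wFun z ^ c) (cobounded ℂ) (𝓝 1) := by
  simpa [Function.comp_def] using
    (continuousAt_cpow_const (b := c) one_mem_slitPlane).tendsto.comp tendsto_wFun_cobounded

lemma inv_sqrt_two_mul_inv_sqrt_two :
    ((Real.sqrt 2 : ℂ))⁻¹ * ((Real.sqrt 2 : ℂ))⁻¹ = 2⁻¹ := by
  rw [← mul_inv, ← ofReal_mul, Real.mul_self_sqrt zero_le_two, ofReal_ofNat]

lemma Vmat_inv : Vmat⁻¹ = ((Real.sqrt 2 : ℂ))⁻¹ • !![1, -I; -I, 1] := by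
  refine inv_eq_right_inv ?_
  rw [Vmat, smul_mul_smul_comm, mul_fin_two, inv_sqrt_two_mul_inv_sqrt_two, one_fin_two]
  ext i j
  fin_cases i <;> fin_cases j <;> simp <;> ring_nf

lemma Vmat_mul_mul_Vmat_inv (a b : ℂ) :
    Vmat * !![a, 0; 0, b] * Vmat⁻¹ =
      !![(a + b) / 2, I * (b - a) / 2; I * (a - b) / 2, (a + b) / 2] := by
  rw [Vmat_inv, Vmat]
  simp only [smul_mul_assoc, mul_smul_comm, smul_smul, mul_fin_two,
    inv_sqrt_two_mul_inv_sqrt_two]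
  ext i j
  fin_cases i <;> fin_cases j <;> simp <;> ring_nf <;> simp [I_sq] <;> ring

lemma tendsto_matrix_fin_two {ι R : Type*} [TopologicalSpace R] {l : Filter ι}
    {f₁₁ f₁₂ f₂₁ f₂₂ : ι → R} {a₁₁ a₁₂ a₂₁ a₂₂ : R}
    (h₁₁ : Tendsto f₁₁ l (𝓝 a₁₁)) (h₁₂ : Tendsto f₁₂ l (𝓝 a₁₂))
    (h₂₁ : Tendsto f₂₁ l (𝓝 a₂₁)) (h₂₂ : Tendsto f₂₂ l (𝓝 a₂₂)) :
    Tendsto (fun t => !![f₁₁ t, f₁₂ t; f₂₁ t, f₂₂ t]) l (𝓝 !![a₁₁, a₁₂; a₂₁, a₂₂]) := by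
  refine tendsto_pi_nhds.mpr fun i => tendsto_pi_nhds.mpr fun j => ?_
  fin_cases i <;> fin_cases j <;> simpa

lemma Pinf_mul_Vmat_inv_mul_diag (α : ℝ) (z r s : ℂ) :
    Pinf α z * Vmat⁻¹ * !![r, 0; 0, s] =
      !![1, 0; 2 * (α : ℂ) * I, 1] *
        !![(z + 1) ^ (-(1 : ℂ) / 4) * r * ((wFun z ^ (-(α : ℂ)) + wFun z ^ (α : ℂ)) / 2),
          (z + 1) ^ (-(1 : ℂ) / 4) * s * (I * (wFun z ^ (α : ℂ) - wFun z ^ (-(α : ℂ))) / 2);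
          (z + 1) ^ ((1 : ℂ) / 4) * r * (I * (wFun z ^ (-(α : ℂ)) - wFun z ^ (α : ℂ)) / 2),
          (z + 1) ^ ((1 : ℂ) / 4) * s * ((wFun z ^ (-(α : ℂ)) + wFun z ^ (α : ℂ)) / 2)] := by
  rw [Pinf, Matrix.mul_assoc (_ * _ * Vmat), Matrix.mul_assoc (_ * _) Vmat,
    ← Matrix.mul_assoc Vmat, Vmat_mul_mul_Vmat_inv, Matrix.mul_assoc, Matrix.mul_assoc]
  congr 1
  simp only [mul_fin_two]
  ext i j
  fin_cases i <;> fin_cases j <;> simp <;> ring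

lemma tendsto_Pinf_mul_Vmat_inv_mul_diag_cobounded (α : ℝ) :
    Tendsto (fun z : ℂ => Pinf α z * Vmat⁻¹ * !![z ^ ((1 : ℂ) / 4), 0; 0, z ^ (-(1 : ℂ) / 4)])
      (cobounded ℂ) (𝓝 1) := by
  simp_rw [Pinf_mul_Vmat_inv_mul_diag]
  have hsum : Tendsto (fun z => (wFun z ^ (-(α : ℂ)) + wFun z ^ (α : ℂ)) / 2)
      (cobounded ℂ) (𝓝 1) := by
    simpa using
      ((tendsto_wFun_cpow_cobounded _).add (tendsto_wFun_cpow_cobounded _)).div_const 2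
  have hdiff : Tendsto (fun z => I * (wFun z ^ (α : ℂ) - wFun z ^ (-(α : ℂ))) / 2)
      (cobounded ℂ) (𝓝 0) := by
    simpa using (((tendsto_wFun_cpow_cobounded _).sub
      (tendsto_wFun_cpow_cobounded _)).const_mul I).div_const 2
  have hdown := tendsto_add_one_cpow_mul_cpow_cobounded (c := -1 / 4) (d := 1 / 4) (by ring)
  have hup := tendsto_add_one_cpow_mul_cpow_cobounded (c := 1 / 4) (d := -1 / 4) (by ring)
  have h₁₂ : Tendsto (fun z : ℂ => (z + 1) ^ (-(1 : ℂ) / 4) * z ^ (-(1 : ℂ) / 4))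
      (cobounded ℂ) (𝓝 0) := by
    have h : Tendsto (fun z : ℂ => z ^ (-(1 : ℂ) / 4)) (cobounded ℂ) (𝓝 0) := by
      simpa [neg_div] using tendsto_cpow_ofReal_neg_cobounded (x := -1 / 4) (by norm_num)
    simpa using (h.comp (tendsto_add_const_cobounded 1)).mul h
  have h₂₁ : Tendsto (fun z : ℂ => (z + 1) ^ ((1 : ℂ) / 4) * z ^ ((1 : ℂ) / 4) *
      (I * (wFun z ^ (-(α : ℂ)) - wFun z ^ (α : ℂ)) / 2)) (cobounded ℂ)
      (𝓝 (-(2 * α * I))) := by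
    have h := (hup.mul (tendsto_cpow_half_mul_wFun_cpow_sub_cobounded α)).mul_const (I / 2)
    rw [one_mul, show -4 * (α : ℂ) * (I / 2) = -(2 * α * I) by ring] at h
    refine h.congr' ?_
    filter_upwards [eventually_ne_cobounded 0] with z hz
    rw [show (1 : ℂ) / 4 = -1 / 4 + 1 / 2 by norm_num, cpow_add _ _ hz]
    ring
  have hE : !![1, 0; 2 * (α : ℂ) * I, 1] * !![1, 0; -(2 * α * I), 1] = 1 := by
    rw [mul_fin_two, one_fin_two]
    simp
  rw [← hE]
  refine Tendsto.const_mul _ ?_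
  simpa using tendsto_matrix_fin_two (hdown.mul hsum) (h₁₂.mul hdiff) h₂₁ (hup.mul hsum)

theorem stmt10_general (α : ℝ) :
    Tendsto
      (fun z : ℂ => Pinf α z * Vmat⁻¹ * !![z ^ ((1 : ℂ) / 4), 0; 0, z ^ (-(1 : ℂ) / 4)])
      ((Filter.comap (fun z : ℂ => ‖z‖) Filter.atTop) ⊓
        Filter.principal {z : ℂ | ¬(z.im = 0 ∧ z.re ≤ 0)})
      (𝓝 (1 : Matrix (Fin 2) (Fin 2) ℂ)) := by
  rw [comap_norm_atTop]
  exact (tendsto_Pinf_mul_Vmat_inv_mul_diag_cobounded α).mono_left inf_le_left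

/-- `P^{(∞)}_α(z) · V⁻¹ · diag(z^{1/4}, z^{−1/4}) → I` as `|z| → ∞` with `z ∉ (−∞, 0]`. -/
theorem stmt10 (α : ℝ) (hα : -1 / 2 < α) :
    Tendsto
      (fun z : ℂ => Pinf α z * Vmat⁻¹ * !![z ^ ((1 : ℂ) / 4), 0; 0, z ^ (-(1 : ℂ) / 4)])
      ((Filter.comap (fun z : ℂ => ‖z‖) Filter.atTop) ⊓
        Filter.principal {z : ℂ | ¬(z.im = 0 ∧ z.re ≤ 0)})
      (𝓝 (1 : Matrix (Fin 2) (Fin 2) ℂ)) :=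
  stmt10_general α
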